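/- If g : X × X → ℝ is a symmetric conditionally negative definite function with g(x,x) = 0 for all x, then for every γ > 0 the function k(x,y) = exp(−γ g(x,y)) is a positive semi-definite kernel (Schoenberg's theorem). -/

import Mathlib

/-- A function `k : X → X → ℝ` is a positive semi-definite kernel if it is symmetric
and every Gram quadratic form is nonnegative. -/
def IsPSDKernel {X : Type*} (k : X → X → ℝ) : Prop :=
  (∀ x y, k x y = k y x) ∧
    ∀ (n : ℕ) (x : Fin n → X) (c : Fin n → ℝ),
      0 ≤ ∑ i, ∑ j, c i * c j * k (x i) (x j)

/-- `g : X → X → ℝ` is conditionally negative definite if it is symmetric and the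
Gram quadratic form is nonpositive on coefficient vectors summing to zero. -/
def IsCND {X : Type*} (g : X → X → ℝ) : Prop :=
  (∀ x y, g x y = g y x) ∧
    ∀ (n : ℕ) (x : Fin n → X) (c : Fin n → ℝ), (∑ i, c i) = 0 →
      ∑ i, ∑ j, c i * c j * g (x i) (x j) ≤ 0

/-!
Fix a base point `x₀`. Conditional negative definiteness of `g`, applied to `x₀, x₁, …, xₙ` with
coefficients `-∑ cᵢ, c₁, …, cₙ`, says exactly that the centred kernel
`g(x, x₀) + g(y, x₀) - g(x, y)` is positive semi-definite. By the Schur product theorem positive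
semi-definite kernels are closed under entrywise powers, hence, summing the exponential series,
under entrywise `exp`. Finally, with `f x = exp (-γ g(x, x₀))`,
`exp (-γ g(x, y)) = f x * exp (γ (g(x, x₀) + g(y, x₀) - g(x, y))) * f y`, and such a rescaling
preserves positive semi-definiteness.
-/

open Finset Matrix Nat

lemma dotProduct_mulVec_self_eq_sum {ι R : Type*} [Fintype ι] [CommSemiring R]
    (A : Matrix ι ι R) (v : ι → R) :
    v ⬝ᵥ A *ᵥ v = ∑ i, ∑ j, v i * v j * A i j := by
  simp only [dotProduct, mulVec, mul_sum]
  exact sum_congr rfl fun i _ => sum_congr rfl fun j _ => by ring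

namespace IsPSDKernel

variable {X : Type*} {k k' : X → X → ℝ}

lemma of_isEmpty [IsEmpty X] (k : X → X → ℝ) : IsPSDKernel k :=
  ⟨fun x => isEmptyElim x, fun n x c => by
    have := x.isEmpty
    simp [univ_eq_empty]⟩

lemma one : IsPSDKernel fun _ _ : X => (1 : ℝ) :=
  ⟨fun _ _ => rfl, fun n x c => by
    simpa only [mul_one, ← sum_mul_sum] using mul_self_nonneg (∑ i, c i)⟩

lemma const_mul (hk : IsPSDKernel k) {γ : ℝ} (hγ : 0 ≤ γ) :
    IsPSDKernel fun x y => γ * k x y :=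
  ⟨fun x y => congrArg (γ * ·) (hk.1 x y), fun n x c =>
    (mul_nonneg hγ (hk.2 n x c)).trans_eq <| by
    simp only [mul_sum]
    exact sum_congr rfl fun i _ => sum_congr rfl fun j _ => by ring⟩

lemma mul_mul (hk : IsPSDKernel k) (f : X → ℝ) :
    IsPSDKernel fun x y => f x * k x y * f y :=
  ⟨fun x y => by dsimp only; rw [hk.1]; ring, fun n x c => by
    convert hk.2 n x (fun i => c i * f (x i)) using 3 with i _ j _
    ring⟩

lemma posSemidef_gram (hk : IsPSDKernel k) {n : ℕ} (x : Fin n → X) :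
    (Matrix.of fun i j => k (x i) (x j)).PosSemidef := by
  refine posSemidef_iff_dotProduct_mulVec.mpr ⟨?_, fun v => ?_⟩
  · ext i j
    simp [hk.1 (x i) (x j)]
  · simpa only [star_trivial, dotProduct_mulVec_self_eq_sum, of_apply] using hk.2 n x v

lemma of_posSemidef_gram (hsymm : ∀ x y, k x y = k y x)
    (hgram : ∀ (n : ℕ) (x : Fin n → X), (Matrix.of fun i j => k (x i) (x j)).PosSemidef) :
    IsPSDKernel k :=
  ⟨hsymm, fun n x c => by
    simpa only [star_trivial, dotProduct_mulVec_self_eq_sum, of_apply]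
      using (hgram n x).dotProduct_mulVec_nonneg c⟩

lemma mul (hk : IsPSDKernel k) (hk' : IsPSDKernel k') : IsPSDKernel fun x y => k x y * k' x y :=
  of_posSemidef_gram (fun x y => by rw [hk.1, hk'.1]) fun _ x =>
    (hk.posSemidef_gram x).hadamard (hk'.posSemidef_gram x)

lemma pow (hk : IsPSDKernel k) (m : ℕ) : IsPSDKernel fun x y => k x y ^ m := by
  induction m with
  | zero => simpa only [pow_zero] using one
  | succ m ih => simpa only [pow_succ] using ih.mul hk

lemma exp (hk : IsPSDKernel k) : IsPSDKernel fun x y => Real.exp (k x y) := by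
  refine ⟨fun x y => congrArg Real.exp (hk.1 x y), fun n x c => ?_⟩
  have hseries : ∀ t : ℝ, HasSum (fun m : ℕ => (m ! : ℝ)⁻¹ * t ^ m) (Real.exp t) := fun t => by
    simpa only [Real.exp_eq_exp_ℝ, div_eq_inv_mul] using NormedSpace.expSeries_div_hasSum_exp t
  refine hasSum_le (fun m => ?_) hasSum_zero
    (hasSum_sum fun i _ => hasSum_sum fun j _ => (hseries (k (x i) (x j))).mul_left (c i * c j))
  exact ((hk.pow m).const_mul (by positivity)).2 n x c

end IsPSDKernel

lemma IsCND.isPSDKernel_centered {X : Type*} {g : X → X → ℝ} (hg : IsCND g)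
    (hdiag : ∀ x, g x x = 0) (x₀ : X) :
    IsPSDKernel fun x y => g x x₀ + g y x₀ - g x y := by
  refine ⟨fun x y => by dsimp only; rw [hg.1 x y]; ring, fun n x c => ?_⟩
  set s := ∑ i, c i
  set t := ∑ i, c i * g (x i) x₀
  have hcnd := hg.2 (n + 1) (Fin.cons x₀ x) (Fin.cons (-s) c) (by simp [Fin.sum_cons, s])
  simp only [Fin.sum_univ_succ, Fin.cons_zero, Fin.cons_succ, hdiag, hg.1 x₀, mul_zero, zero_add,
    sum_add_distrib] at hcnd
  have hleft : ∑ i, -s * c i * g (x i) x₀ = -s * t := by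
    rw [mul_sum]; exact sum_congr rfl fun i _ => by ring
  have hright : ∑ i, c i * -s * g (x i) x₀ = -s * t := by
    rw [mul_sum]; exact sum_congr rfl fun i _ => by ring
  have hrow : ∑ i, ∑ j, c i * c j * g (x i) x₀ = t * s := by
    rw [sum_mul_sum]; exact sum_congr rfl fun i _ => sum_congr rfl fun j _ => by ring
  have hcol : ∑ i, ∑ j, c i * c j * g (x j) x₀ = s * t := by
    rw [sum_mul_sum]; exact sum_congr rfl fun i _ => sum_congr rfl fun j _ => by ring
  simp only [mul_add, mul_sub, sum_add_distrib, sum_sub_distrib, hrow, hcol]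
  linarith

/-- Schoenberg's theorem: if `g` is a symmetric conditionally negative definite
function with `g x x = 0` for all `x`, then for every `γ > 0` the function
`k(x,y) = exp (−γ g(x,y))` is a positive semi-definite kernel. -/
theorem schoenberg {X : Type*} (g : X → X → ℝ)
    (hg : IsCND g) (hdiag : ∀ x, g x x = 0) :
    ∀ γ : ℝ, 0 < γ → IsPSDKernel (fun x y => Real.exp (-γ * g x y)) := by
  intro γ hγ
  rcases isEmpty_or_nonempty X with _ | ⟨⟨x₀⟩⟩
  · exact IsPSDKernel.of_isEmpty _
  have hk := ((hg.isPSDKernel_centered hdiag x₀).const_mul hγ.le).exp.mul_mul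
    fun x => Real.exp (-γ * g x x₀)
  convert hk using 3 with x y
  rw [← Real.exp_add, ← Real.exp_add]
  ring_nf
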